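/- arXiv:1905.12718 — 3 statements merged into one kernel-verified Lean document; each statement's English description precedes it below -/
import Mathlib

section
/- Let ρ(t) = |t|^r with r ≥ 1, let P ∈ 𝒫^ρ_d, let A be an invertible d×d real matrix, b ∈ ℝ^d, α ∈ (0,1), and u ∈ S^{d−1}. Set u_A = (A⁻¹)ᵀu / ‖(A⁻¹)ᵀu‖ and let P_{A,b} be the pushforward of P under z ↦ Az + b. Then H^ρ_{α,u_A}(P_{A,b}) = A·H^ρ_{α,u}(P) + b and the boundary hyperplane satisfies π^ρ_{α,u_A}(P_{A,b}) = A·π^ρ_{α,u}(P) + b, where the right-hand sides denote images of the sets under z ↦ Az + b. -/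
open MeasureTheory Set Filter
open scoped RealInnerProductSpace ENNReal

noncomputable section

/-- The class `𝒞` of loss functions: convex, nonnegative, even, vanishing only at `0`. -/
def LossClass (ρ : ℝ → ℝ) : Prop :=
  ConvexOn ℝ Set.univ ρ ∧ (∀ t, 0 ≤ ρ t) ∧ (∀ t, ρ (-t) = ρ t) ∧ (∀ t, ρ t = 0 ↔ t = 0)

/-- `ψ` is the left-derivative of `ρ`. -/
def IsLeftDeriv (ρ ψ : ℝ → ℝ) : Prop :=
  ∀ x : ℝ, HasDerivWithinAt ρ (ψ x) (Set.Iio x) x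

/-- `G^ρ_Q(θ) = E_Q[|ψ₋(Y−θ)|·𝟙[Y ≤ θ]] / E_Q[|ψ₋(Y−θ)|]` (equal to `0` when the
denominator vanishes, by the Lean convention for division by zero). -/
def Gfun (ψ : ℝ → ℝ) (Q : Measure ℝ) (θ : ℝ) : ℝ :=
  (∫ y, |ψ (y - θ)| * (if y ≤ θ then 1 else 0) ∂Q) / ∫ y, |ψ (y - θ)| ∂Q

/-- The order-`α` M-quantile `θ^ρ_α(Q) = inf{θ : G^ρ_Q(θ) ≥ α}` of a law `Q` on `ℝ`. -/
def MQuant (ψ : ℝ → ℝ) (Q : Measure ℝ) (α : ℝ) : ℝ :=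
  sInf {θ : ℝ | α ≤ Gfun ψ Q θ}

/-- The pushforward `P_u` of `P` under `z ↦ u'z`. -/
def dirProj {d : ℕ} (P : Measure (EuclideanSpace ℝ (Fin d)))
    (u : EuclideanSpace ℝ (Fin d)) : Measure ℝ :=
  P.map (fun z => ⟪u, z⟫)

/-- The order-`α` M-quantile halfspace `H^ρ_{α,u}(P) = {z : u'z ≥ θ^ρ_α(P_u)}`. -/
def MHalf {d : ℕ} (ψ : ℝ → ℝ) (P : Measure (EuclideanSpace ℝ (Fin d))) (α : ℝ)
    (u : EuclideanSpace ℝ (Fin d)) : Set (EuclideanSpace ℝ (Fin d)) :=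
  {z | MQuant ψ (dirProj P u) α ≤ ⟪u, z⟫}

/-- The order-`α` M-quantile hyperplane `π^ρ_{α,u}(P) = {z : u'z = θ^ρ_α(P_u)}`. -/
def MHyp {d : ℕ} (ψ : ℝ → ℝ) (P : Measure (EuclideanSpace ℝ (Fin d))) (α : ℝ)
    (u : EuclideanSpace ℝ (Fin d)) : Set (EuclideanSpace ℝ (Fin d)) :=
  {z | ⟪u, z⟫ = MQuant ψ (dirProj P u) α}

/-- The order-`α` M-quantile region `R^ρ_α(P) = ⋂_{u ∈ S^{d−1}} H^ρ_{α,u}(P)`. -/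
def MRegion {d : ℕ} (ψ : ℝ → ℝ) (P : Measure (EuclideanSpace ℝ (Fin d))) (α : ℝ) :
    Set (EuclideanSpace ℝ (Fin d)) :=
  ⋂ u ∈ {u : EuclideanSpace ℝ (Fin d) | ‖u‖ = 1}, MHalf ψ P α u

/-- The halfspace M-depth `MD^ρ(z,P) = sup{α > 0 : z ∈ R^ρ_α(P)}` (with `sup ∅ = 0`,
which is the Lean convention for `sSup` of the empty set of reals). -/
def MDepth {d : ℕ} (ψ : ℝ → ℝ) (P : Measure (EuclideanSpace ℝ (Fin d)))
    (z : EuclideanSpace ℝ (Fin d)) : ℝ :=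
  sSup {α : ℝ | α ∈ Set.Ioo (0 : ℝ) 1 ∧ z ∈ MRegion ψ P α}

/-- The C-support `C_P = {z : P[{y : u'y ≤ u'z}] > 0 for every unit u}`. -/
def Csupport {d : ℕ} (P : Measure (EuclideanSpace ℝ (Fin d))) :
    Set (EuclideanSpace ℝ (Fin d)) :=
  {z | ∀ u : EuclideanSpace ℝ (Fin d), ‖u‖ = 1 → 0 < P {y | ⟪u, y⟫ ≤ ⟪u, z⟫}}

/-! For `ρ = |·|^r` the left derivative satisfies `|ψ t| = r |t|^(r-1)`, which is positively
homogeneous, so `G` of the law of `cY + β` (`c > 0`) at `θ` is `G` of the law of `Y` at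
`(θ - β) / c`, and the M-quantile is affine equivariant. Passing `t ↦ ct + β` through the `sInf`
needs the superlevel set `{G ≥ α}` to be nonempty and bounded below (else `sInf` is the junk value
`0`); this follows from `G → 1` at `+∞` and `G → 0` at `-∞`, by dominated convergence for the tail
integrals and a uniform lower bound on the denominator. The direction `u_A` is chosen so that
`u_A'(Az + b) = c u'z + β` with `c = ‖(A⁻¹)ᵀu‖⁻¹ > 0`, so the `u_A`-projection of `P_{A,b}` is the
law of `c u'Z + β`. -/

open Topology

lemma tendsto_integral_mul_of_eventually_eq_zero {α ι : Type*} [MeasurableSpace α]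
    {μ : Measure α} {l : Filter ι} [l.IsCountablyGenerated] {f : α → ℝ} (hf : Integrable f μ)
    {g : ι → α → ℝ} (hg_meas : ∀ i, Measurable (g i)) (hg_le : ∀ i x, |g i x| ≤ 1)
    (hg_lim : ∀ x, ∀ᶠ i in l, g i x = 0) :
    Tendsto (fun i => ∫ x, f x * g i x ∂μ) l (𝓝 0) := by
  have key := tendsto_integral_filter_of_dominated_convergence (μ := μ) (l := l)
    (F := fun i x => f x * g i x) (f := fun _ => 0) (fun x => ‖f x‖)
    (Eventually.of_forall fun i => hf.aestronglyMeasurable.mul (hg_meas i).aestronglyMeasurable)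
    (Eventually.of_forall fun i => ae_of_all _ fun x => by
      rw [norm_mul, Real.norm_eq_abs (g i x)]
      exact mul_le_of_le_one_right (norm_nonneg _) (hg_le i x))
    hf.norm
    (ae_of_all _ fun x => tendsto_const_nhds.congr' <|
      (hg_lim x).mono fun i hi => by simp only [hi, mul_zero])
  simpa using key

lemma tendsto_div_nhds_zero_of_le {ι : Type*} {l : Filter ι} {a T D : ι → ℝ} {c : ℝ}
    (hc : 0 < c) (ha : ∀ᶠ i in l, 0 ≤ a i ∧ a i ≤ T i) (hD : ∀ᶠ i in l, c ≤ D i)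
    (hT : Tendsto T l (𝓝 0)) : Tendsto (fun i => a i / D i) l (𝓝 0) :=
  squeeze_zero' ((ha.and hD).mono fun i h => div_nonneg h.1.1 (hc.le.trans h.2))
    ((ha.and hD).mono fun i h => div_le_div₀ (h.1.1.trans h.1.2) h.1.2 hc h.2)
    (by simpa using hT.div_const c)

lemma Filter.Tendsto.nonempty_setOf_le_of_atTop {f : ℝ → ℝ} {a b : ℝ}
    (hf : Tendsto f atTop (𝓝 b)) (hab : a < b) : {x | a ≤ f x}.Nonempty :=
  (hf.eventually (eventually_ge_nhds hab)).exists

lemma Filter.Tendsto.bddBelow_setOf_le_of_atBot {f : ℝ → ℝ} {a b : ℝ}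
    (hf : Tendsto f atBot (𝓝 b)) (hba : b < a) : BddBelow {x | a ≤ f x} := by
  obtain ⟨M, hM⟩ := eventually_atBot.1 (hf.eventually (eventually_lt_nhds hba))
  exact ⟨M, fun x hx => le_of_not_ge fun hxM => (hM x hxM).not_ge hx⟩

section MQuantile

variable {ψ : ℝ → ℝ} {Q : Measure ℝ}

lemma Gfun_map_mul_add {c k : ℝ} (hc : 0 < c) (hk : k ≠ 0)
    (hhom : ∀ t, |ψ (c * t)| = k * |ψ t|) (β θ : ℝ) :
    Gfun ψ (Q.map fun t => c * t + β) θ = Gfun ψ Q ((θ - β) / c) := by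
  have hemb : MeasurableEmbedding fun t : ℝ => c * t + β :=
    (measurableEmbedding_addRight β).comp (measurableEmbedding_mulLeft₀ hc.ne')
  have hsub : ∀ t, c * t + β - θ = c * (t - (θ - β) / c) := fun t => by field_simp; ring
  have hle : ∀ t, c * t + β ≤ θ ↔ t ≤ (θ - β) / c := fun t => by
    rw [le_div_iff₀ hc]; constructor <;> intro h <;> linarith
  simp only [Gfun, hemb.integral_map, hsub, hhom, hle, mul_assoc, integral_const_mul]
  exact mul_div_mul_left _ _ hk

lemma ite_mem_Icc_zero_one (p : Prop) [Decidable p] : (if p then (1 : ℝ) else 0) ∈ Icc 0 1 := by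
  split_ifs <;> norm_num

variable (hint : ∀ θ, Integrable (fun y => |ψ (y - θ)|) Q)
include hint

lemma integrable_abs_sub_mul {g : ℝ → ℝ} (hg_meas : Measurable g) (hg : ∀ y, g y ∈ Icc (0 : ℝ) 1)
    (θ : ℝ) : Integrable (fun y => |ψ (y - θ)| * g y) Q :=
  (hint θ).mul_bdd hg_meas.aestronglyMeasurable
    (ae_of_all _ fun y => by rw [Real.norm_of_nonneg (hg y).1]; exact (hg y).2)

variable (hmono : ∀ {s t : ℝ}, |s| ≤ |t| → |ψ s| ≤ |ψ t|)
include hmono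

lemma integral_abs_sub_mul_le {g : ℝ → ℝ} (hg_meas : Measurable g)
    (hg : ∀ y, g y ∈ Icc (0 : ℝ) 1) {θ θ' : ℝ} (hθ : ∀ y, g y ≠ 0 → |y - θ| ≤ |y - θ'|) :
    ∫ y, |ψ (y - θ)| * g y ∂Q ≤ ∫ y, |ψ (y - θ')| * g y ∂Q := by
  refine integral_mono (integrable_abs_sub_mul hint hg_meas hg θ)
    (integrable_abs_sub_mul hint hg_meas hg θ') fun y => ?_
  by_cases hy : g y = 0
  · simp only [hy, mul_zero, le_refl]
  · exact mul_le_mul_of_nonneg_right (hmono (hθ y hy)) (hg y).1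

lemma mul_measureReal_le_integral_abs_sub [IsFiniteMeasure Q] {s : Set ℝ} (hs : MeasurableSet s)
    {θ : ℝ} (h1 : ∀ y ∈ s, 1 ≤ |y - θ|) : |ψ 1| * Q.real s ≤ ∫ y, |ψ (y - θ)| ∂Q :=
  calc |ψ 1| * Q.real s = ∫ _ in s, |ψ 1| ∂Q := by rw [setIntegral_const, smul_eq_mul, mul_comm]
    _ ≤ ∫ y in s, |ψ (y - θ)| ∂Q :=
      setIntegral_mono_on (integrableOn_const (by finiteness)) (hint θ).integrableOn hs
        fun y hy => hmono (by rw [abs_one]; exact h1 y hy)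
    _ ≤ ∫ y, |ψ (y - θ)| ∂Q :=
      setIntegral_le_integral (hint θ) (ae_of_all _ fun _ => abs_nonneg _)

variable [IsFiniteMeasure Q] [NeZero Q] (hψ1 : ψ 1 ≠ 0)
include hψ1

lemma tendsto_Gfun_atBot : Tendsto (Gfun ψ Q) atBot (𝓝 0) := by
  obtain ⟨θ₁, hθ₁⟩ := ((tendsto_measure_Ici_atBot Q).eventually
    (eventually_gt_nhds (NeZero.pos (Q univ)))).exists
  have hp : 0 < |ψ 1| * Q.real (Ici θ₁) :=
    mul_pos (abs_pos.2 hψ1) (ENNReal.toReal_pos hθ₁.ne' (measure_ne_top _ _))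
  have hmeas : ∀ θ : ℝ, Measurable fun y : ℝ => if y ≤ θ then (1 : ℝ) else 0 := fun θ =>
    measurable_const.ite measurableSet_Iic measurable_const
  have hT := tendsto_integral_mul_of_eventually_eq_zero (hint θ₁) hmeas
    (fun θ y => by split_ifs <;> norm_num)
    fun y => (eventually_lt_atBot y).mono fun θ h => if_neg h.not_ge
  refine tendsto_div_nhds_zero_of_le hp ?_ ?_ hT
  · filter_upwards [eventually_le_atBot θ₁] with θ hθ
    refine ⟨integral_nonneg fun y => mul_nonneg (abs_nonneg _) (ite_mem_Icc_zero_one _).1,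
      integral_abs_sub_mul_le hint hmono (hmeas θ) (fun y => ite_mem_Icc_zero_one _)
        fun y hy => ?_⟩
    have hyθ : y ≤ θ := (ite_ne_right_iff.1 hy).1
    rw [abs_of_nonpos (by linarith), abs_of_nonpos (by linarith)]
    linarith
  · filter_upwards [eventually_le_atBot (θ₁ - 1)] with θ hθ
    exact mul_measureReal_le_integral_abs_sub hint hmono measurableSet_Ici
      fun y hy => le_abs.2 (Or.inl (by linarith [mem_Ici.1 hy]))

lemma tendsto_Gfun_atTop : Tendsto (Gfun ψ Q) atTop (𝓝 1) := by
  obtain ⟨θ₀, hθ₀⟩ := ((tendsto_measure_Iic_atTop Q).eventually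
    (eventually_gt_nhds (NeZero.pos (Q univ)))).exists
  have hq : 0 < |ψ 1| * Q.real (Iic θ₀) :=
    mul_pos (abs_pos.2 hψ1) (ENNReal.toReal_pos hθ₀.ne' (measure_ne_top _ _))
  have hD : ∀ θ, θ₀ + 1 ≤ θ → |ψ 1| * Q.real (Iic θ₀) ≤ ∫ y, |ψ (y - θ)| ∂Q := fun θ hθ =>
    mul_measureReal_le_integral_abs_sub hint hmono measurableSet_Iic
      fun y hy => le_abs.2 (Or.inr (by linarith [mem_Iic.1 hy]))
  have hmeas : ∀ θ : ℝ, Measurable fun y : ℝ => if θ < y then (1 : ℝ) else 0 := fun θ =>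
    measurable_const.ite measurableSet_Ioi measurable_const
  have hT := tendsto_integral_mul_of_eventually_eq_zero (hint θ₀) hmeas
    (fun θ y => by split_ifs <;> norm_num)
    fun y => (eventually_ge_atTop y).mono fun θ h => if_neg h.not_gt
  have h_one_sub : ∀ θ, θ₀ + 1 ≤ θ → 1 - Gfun ψ Q θ =
      (∫ y, |ψ (y - θ)| * (if θ < y then 1 else 0) ∂Q) / ∫ y, |ψ (y - θ)| ∂Q := by
    intro θ hθ
    rw [Gfun, one_sub_div (hq.trans_le (hD θ hθ)).ne', ← integral_sub (hint θ)
      (integrable_abs_sub_mul hint (measurable_const.ite measurableSet_Iic measurable_const)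
        (fun y => ite_mem_Icc_zero_one _) θ)]
    congr 1
    refine integral_congr_ae (ae_of_all _ fun y => ?_)
    by_cases hy : y ≤ θ <;> simp [hy, not_lt.2, lt_of_not_ge]
  have h : Tendsto (fun θ => 1 - Gfun ψ Q θ) atTop (𝓝 0) := by
    refine (tendsto_div_nhds_zero_of_le (D := fun θ => ∫ y, |ψ (y - θ)| ∂Q)
      (a := fun θ => ∫ y, |ψ (y - θ)| * (if θ < y then 1 else 0) ∂Q) hq ?_ ?_ hT).congr' ?_
    · filter_upwards [eventually_ge_atTop θ₀] with θ hθ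
      refine ⟨integral_nonneg fun y => mul_nonneg (abs_nonneg _) (ite_mem_Icc_zero_one _).1,
        integral_abs_sub_mul_le hint hmono (hmeas θ) (fun y => ite_mem_Icc_zero_one _)
          fun y hy => ?_⟩
      have hθy : θ < y := (ite_ne_right_iff.1 hy).1
      rw [abs_of_pos (by linarith), abs_of_pos (by linarith)]
      linarith
    · filter_upwards [eventually_ge_atTop (θ₀ + 1)] with θ hθ using hD θ hθ
    · filter_upwards [eventually_ge_atTop (θ₀ + 1)] with θ hθ using (h_one_sub θ hθ).symm
  simpa using (tendsto_const_nhds (x := (1 : ℝ))).sub h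

end MQuantile

lemma MQuant_map_mul_add {ψ : ℝ → ℝ} {Q : Measure ℝ} {α c k : ℝ} (hc : 0 < c) (hk : k ≠ 0)
    (hhom : ∀ t, |ψ (c * t)| = k * |ψ t|) (hne : {θ | α ≤ Gfun ψ Q θ}.Nonempty)
    (hbdd : BddBelow {θ | α ≤ Gfun ψ Q θ}) (β : ℝ) :
    MQuant ψ (Q.map fun t => c * t + β) α = c * MQuant ψ Q α + β := by
  have himage : {θ | α ≤ Gfun ψ (Q.map fun t => c * t + β) θ} =
      (fun t => c * t + β) '' {θ | α ≤ Gfun ψ Q θ} := by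
    rw [image_eq_preimage_of_inverse (g := fun θ => (θ - β) / c)
      (fun t => by field_simp; ring) (fun θ => by field_simp; ring)]
    ext θ
    simp only [mem_ofPred_eq, mem_preimage, Gfun_map_mul_add hc hk hhom]
  rw [MQuant, MQuant, himage, ← Monotone.map_csInf_of_continuousAt (by fun_prop)
    (fun s t h => add_le_add_left (mul_le_mul_of_nonneg_left h hc.le) β) hne hbdd]

lemma abs_eq_of_isLeftDeriv_abs_rpow {r : ℝ} (hr : 1 ≤ r) {ψ : ℝ → ℝ}
    (hψ : IsLeftDeriv (fun t => |t| ^ r) ψ) (t : ℝ) : |ψ t| = r * |t| ^ (r - 1) := by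
  have hrpow := fun x : ℝ => Real.hasDerivAt_rpow_const (x := x) (Or.inr hr)
  rcases le_or_gt t 0 with ht | ht
  · have hderiv : HasDerivWithinAt (fun x : ℝ => |x| ^ r) (r * (-t) ^ (r - 1) * -1) (Iio t) t :=
      ((hrpow (-t)).comp t (hasDerivAt_neg t)).hasDerivWithinAt.congr
        (fun x hx => by simp [abs_of_neg (lt_of_lt_of_le hx ht)]) (by simp [abs_of_nonpos ht])
    rw [(uniqueDiffWithinAt_Iio t).eq_deriv _ (hψ t) hderiv, abs_of_nonpos ht, mul_neg_one,
      abs_neg, abs_of_nonneg (mul_nonneg (by linarith) (Real.rpow_nonneg (by linarith) _))]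
  · have hderiv : HasDerivAt (fun x : ℝ => |x| ^ r) (r * t ^ (r - 1)) t :=
      (hrpow t).congr_of_eventuallyEq ((eventually_gt_nhds ht).mono fun x hx => by
        simp [abs_of_pos hx])
    rw [(uniqueDiffWithinAt_Iio t).eq_deriv _ (hψ t) hderiv.hasDerivWithinAt, abs_of_pos ht,
      abs_of_nonneg (mul_nonneg (by linarith) (Real.rpow_nonneg ht.le _))]

lemma MQuant_map_mul_add_of_abs_eq_rpow {r : ℝ} (hr : 1 ≤ r) {ψ : ℝ → ℝ}
    (hψ : ∀ t, |ψ t| = r * |t| ^ (r - 1)) {Q : Measure ℝ} [IsFiniteMeasure Q] [NeZero Q]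
    (hint : ∀ θ, Integrable (fun y => |ψ (y - θ)|) Q) {α : ℝ} (hα : α ∈ Ioo (0 : ℝ) 1)
    {c : ℝ} (hc : 0 < c) (β : ℝ) :
    MQuant ψ (Q.map fun t => c * t + β) α = c * MQuant ψ Q α + β := by
  have hmono : ∀ {s t : ℝ}, |s| ≤ |t| → |ψ s| ≤ |ψ t| := fun h => by
    rw [hψ, hψ]
    exact mul_le_mul_of_nonneg_left (Real.rpow_le_rpow (abs_nonneg _) h (by linarith))
      (by linarith)
  have hψ1 : ψ 1 ≠ 0 := fun h => by
    have := hψ 1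
    rw [h, abs_zero, abs_one, Real.one_rpow, mul_one] at this
    linarith
  have hhom : ∀ t, |ψ (c * t)| = c ^ (r - 1) * |ψ t| := fun t => by
    rw [hψ, hψ, abs_mul, abs_of_pos hc, Real.mul_rpow hc.le (abs_nonneg t)]
    ring
  exact MQuant_map_mul_add hc (Real.rpow_pos_of_pos hc _).ne' hhom
    ((tendsto_Gfun_atTop hint hmono hψ1).nonempty_setOf_le_of_atTop hα.2)
    ((tendsto_Gfun_atBot hint hmono hψ1).bddBelow_setOf_le_of_atBot hα.1) β

lemma inner_adjoint_symm_apply {E : Type*} [NormedAddCommGroup E] [InnerProductSpace ℝ E]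
    [CompleteSpace E] (A : E ≃L[ℝ] E) (u z : E) :
    ⟪ContinuousLinearMap.adjoint (A.symm : E →L[ℝ] E) u, A z⟫ = ⟪u, z⟫ := by
  rw [ContinuousLinearMap.adjoint_inner_left, ContinuousLinearEquiv.coe_coe,
    ContinuousLinearEquiv.symm_apply_apply]

section Affine

variable {d : ℕ} {P : Measure (EuclideanSpace ℝ (Fin d))}

instance [IsProbabilityMeasure P] (u : EuclideanSpace ℝ (Fin d)) :
    IsProbabilityMeasure (dirProj P u) :=
  Measure.isProbabilityMeasure_map (by fun_prop)

variable {φ : EuclideanSpace ℝ (Fin d) → EuclideanSpace ℝ (Fin d)}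
  {u w : EuclideanSpace ℝ (Fin d)} {c β : ℝ}

lemma dirProj_map_of_inner_eq (hφ : Measurable φ) (h : ∀ z, ⟪w, φ z⟫ = c * ⟪u, z⟫ + β) :
    dirProj (P.map φ) w = (dirProj P u).map fun t => c * t + β := by
  rw [dirProj, dirProj, Measure.map_map (by fun_prop) hφ, Measure.map_map (by fun_prop)
    (by fun_prop)]
  exact congrArg (Measure.map · P) (funext h)

variable {ψ : ℝ → ℝ} {α : ℝ} (hφ : Function.Surjective φ) (h : ∀ z, ⟪w, φ z⟫ = c * ⟪u, z⟫ + β)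
  (hm : MQuant ψ (dirProj (P.map φ) w) α = c * MQuant ψ (dirProj P u) α + β)
include hφ h hm

lemma MHalf_map_of_inner_eq (hc : 0 < c) : MHalf ψ (P.map φ) α w = φ '' MHalf ψ P α u := by
  rw [← image_preimage_eq (MHalf ψ (P.map φ) α w) hφ]
  congr 1
  ext x
  simp only [MHalf, mem_preimage, mem_ofPred_eq, h, hm, add_le_add_iff_right,
    mul_le_mul_iff_right₀ hc]

lemma MHyp_map_of_inner_eq (hc : c ≠ 0) : MHyp ψ (P.map φ) α w = φ '' MHyp ψ P α u := by
  rw [← image_preimage_eq (MHyp ψ (P.map φ) α w) hφ]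
  congr 1
  ext x
  simp only [MHyp, mem_preimage, mem_ofPred_eq, h, hm, add_left_inj, mul_right_inj' hc]

end Affine

theorem stmt_5_general {d : ℕ} (r : ℝ) (hr : 1 ≤ r) (ρ ψ : ℝ → ℝ)
    (hρ : ρ = fun t : ℝ => |t| ^ r) (hψ : IsLeftDeriv ρ ψ)
    (P : Measure (EuclideanSpace ℝ (Fin d))) [IsProbabilityMeasure P]
    (hP2 : ∀ u : EuclideanSpace ℝ (Fin d), ‖u‖ = 1 → ∀ θ : ℝ,
      Integrable (fun t => |ψ (t - θ)|) (dirProj P u))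
    (A : EuclideanSpace ℝ (Fin d) ≃L[ℝ] EuclideanSpace ℝ (Fin d))
    (b : EuclideanSpace ℝ (Fin d)) (α : ℝ) (hα : α ∈ Set.Ioo (0 : ℝ) 1)
    (u uA : EuclideanSpace ℝ (Fin d)) (hu : ‖u‖ = 1)
    (huA : uA = ‖(ContinuousLinearMap.adjoint
        (A.symm : EuclideanSpace ℝ (Fin d) →L[ℝ] EuclideanSpace ℝ (Fin d))) u‖⁻¹ •
      (ContinuousLinearMap.adjoint
        (A.symm : EuclideanSpace ℝ (Fin d) →L[ℝ] EuclideanSpace ℝ (Fin d))) u) :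
    MHalf ψ (P.map (fun z => A z + b)) α uA = (fun z => A z + b) '' MHalf ψ P α u ∧
    MHyp ψ (P.map (fun z => A z + b)) α uA = (fun z => A z + b) '' MHyp ψ P α u := by
  subst hρ huA
  set v := ContinuousLinearMap.adjoint
    (A.symm : EuclideanSpace ℝ (Fin d) →L[ℝ] EuclideanSpace ℝ (Fin d)) u
  have hvA : ∀ z, ⟪v, A z⟫ = ⟪u, z⟫ := inner_adjoint_symm_apply A u
  have hv : v ≠ 0 := fun h => by simpa [h, hu] using hvA u
  have hc : 0 < ‖v‖⁻¹ := inv_pos.2 (norm_pos_iff.2 hv)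
  have hinner : ∀ z, ⟪‖v‖⁻¹ • v, A z + b⟫ = ‖v‖⁻¹ * ⟪u, z⟫ + ‖v‖⁻¹ * ⟪v, b⟫ := fun z => by
    rw [real_inner_smul_left, inner_add_right, hvA, mul_add]
  have hsurj : Function.Surjective fun z => A z + b := fun z => ⟨A.symm (z - b), by simp⟩
  have hm : MQuant ψ (dirProj (P.map fun z => A z + b) (‖v‖⁻¹ • v)) α =
      ‖v‖⁻¹ * MQuant ψ (dirProj P u) α + ‖v‖⁻¹ * ⟪v, b⟫ := by
    rw [dirProj_map_of_inner_eq (by fun_prop) hinner]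
    exact MQuant_map_mul_add_of_abs_eq_rpow hr (abs_eq_of_isLeftDeriv_abs_rpow hr hψ)
      (hP2 u hu) hα hc _
  exact ⟨MHalf_map_of_inner_eq hsurj hinner hm hc, MHyp_map_of_inner_eq hsurj hinner hm hc.ne'⟩

theorem stmt_5 {d : ℕ} (hd : 0 < d) (r : ℝ) (hr : 1 ≤ r) (ρ ψ : ℝ → ℝ)
    (hρ : ρ = fun t : ℝ => |t| ^ r) (hψ : IsLeftDeriv ρ ψ)
    (P : Measure (EuclideanSpace ℝ (Fin d))) [IsProbabilityMeasure P]
    (hP1 : ∀ u : EuclideanSpace ℝ (Fin d), ‖u‖ = 1 → ∀ c : ℝ, P {z | ⟪u, z⟫ = c} < 1)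
    (hP2 : ∀ u : EuclideanSpace ℝ (Fin d), ‖u‖ = 1 → ∀ θ : ℝ,
      Integrable (fun t => |ψ (t - θ)|) (dirProj P u))
    (A : EuclideanSpace ℝ (Fin d) ≃L[ℝ] EuclideanSpace ℝ (Fin d))
    (b : EuclideanSpace ℝ (Fin d)) (α : ℝ) (hα : α ∈ Set.Ioo (0 : ℝ) 1)
    (u uA : EuclideanSpace ℝ (Fin d)) (hu : ‖u‖ = 1)
    (huA : uA = ‖(ContinuousLinearMap.adjoint
        (A.symm : EuclideanSpace ℝ (Fin d) →L[ℝ] EuclideanSpace ℝ (Fin d))) u‖⁻¹ •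
      (ContinuousLinearMap.adjoint
        (A.symm : EuclideanSpace ℝ (Fin d) →L[ℝ] EuclideanSpace ℝ (Fin d))) u) :
    MHalf ψ (P.map (fun z => A z + b)) α uA = (fun z => A z + b) '' MHalf ψ P α u ∧
    MHyp ψ (P.map (fun z => A z + b)) α uA = (fun z => A z + b) '' MHyp ψ P α u :=
  stmt_5_general r hr ρ ψ hρ hψ P hP2 A b α hα u uA hu huA
end
end

section
/- Fix ρ ∈ 𝒞 and P ∈ 𝒫^ρ_d. Then for every α ∈ (0,1), the level-α depth region {z ∈ ℝ^d : MD^ρ(z,P) ≥ α} coincides with the order-α M-quantile region R^ρ_α(P). -/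
open MeasureTheory Set Filter
open scoped RealInnerProductSpace ENNReal

noncomputable section

/-!
Write `G = n / (n + p)` with `n(θ) = E[|ψ(Y - θ)| 𝟙[Y ≤ θ]]` and `p(θ) = E[|ψ(Y - θ)| 𝟙[Y > θ]]`.
Since `ψ` is nondecreasing and has the sign of its argument, `n` is nondecreasing and `p` is
nonincreasing, so `G` is nondecreasing; by dominated convergence `n → 0` at `-∞` and `p → 0` at
`+∞`, so `G` runs from `0` to `1`. For such a `G` the quantile satisfies `θ_α ≤ c` iff
`α ≤ G(c')` for every `c' > c`. Thus `z ∈ R_β` says `β ≤ G_u(c')` for all unit `u` and all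
`c' > u'z`, a condition stable under suprema in `β`; so depth at least `α` means `z ∈ R_α`.
-/

open scoped Topology

namespace ConvexOn

variable {S : Set ℝ} {f : ℝ → ℝ} {x y f' : ℝ}

lemma le_slope_of_hasDerivWithinAt_Iio (hfc : ConvexOn ℝ S f) (hx : x ∈ interior S)
    (hy : y ∈ S) (hxy : x < y) (hf' : HasDerivWithinAt f f' (Iio x) x) :
    f' ≤ slope f x y := by
  rw [← hf'.derivWithin (uniqueDiffWithinAt_Iio x)]
  exact (hfc.leftDeriv_le_rightDeriv_of_mem_interior hx).trans
    (hfc.rightDeriv_le_slope_of_mem_interior hx hy hxy)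

end ConvexOn

lemma HasDerivWithinAt.nonpos_of_forall_lt_le {f : ℝ → ℝ} {f' x : ℝ}
    (hf : HasDerivWithinAt f f' (Iio x) x) (hmin : ∀ t < x, f x ≤ f t) : f' ≤ 0 := by
  refine le_of_tendsto ((hasDerivWithinAt_iff_tendsto_slope' self_notMem_Iio).mp hf) ?_
  filter_upwards [self_mem_nhdsWithin] with t (ht : t < x)
  rw [slope_def_field]
  exact div_nonpos_of_nonneg_of_nonpos (sub_nonneg.2 (hmin t ht)) (by linarith)

structure IsScoreFunction (ψ : ℝ → ℝ) : Prop where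
  monotone : Monotone ψ
  nonpos_zero : ψ 0 ≤ 0
  neg_of_neg : ∀ t < 0, ψ t < 0
  pos_of_pos : ∀ t, 0 < t → 0 < ψ t

theorem LossClass.isScoreFunction {ρ ψ : ℝ → ℝ} (hρ : LossClass ρ) (hψ : IsLeftDeriv ρ ψ) :
    IsScoreFunction ψ := by
  obtain ⟨hconv, hnonneg, -, hzero⟩ := hρ
  have hρ0 : ρ 0 = 0 := (hzero 0).2 rfl
  have hρpos : ∀ t ≠ 0, 0 < ρ t := fun t ht =>
    (hnonneg t).lt_of_ne fun h => ht ((hzero t).1 h.symm)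
  have le_slope : ∀ {x y}, x < y → ψ x ≤ slope ρ x y := fun hxy =>
    hconv.le_slope_of_hasDerivWithinAt_Iio (by simp) (mem_univ _) hxy (hψ _)
  have slope_le : ∀ {x y}, x < y → slope ρ x y ≤ ψ y := fun hxy =>
    hconv.slope_le_of_hasDerivWithinAt_Iio (mem_univ _) (mem_univ _) hxy (hψ _)
  refine ⟨fun x y hxy => ?_, (hψ 0).nonpos_of_forall_lt_le fun t _ => hρ0.symm ▸ hnonneg t,
    fun t ht => (le_slope ht).trans_lt ?_, fun t ht => (slope_le ht).trans_lt' ?_⟩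
  · rcases hxy.eq_or_lt with rfl | hxy
    · exact le_rfl
    · exact (le_slope hxy).trans (slope_le hxy)
  · rw [slope_def_field, hρ0]
    exact div_neg_of_neg_of_pos (by linarith [hρpos t ht.ne]) (by linarith)
  · rw [slope_def_field, hρ0]
    exact div_pos (by linarith [hρpos t ht.ne']) (by linarith)

lemma monotone_div_add_of_monotone_of_antitone {f g : ℝ → ℝ} (hf : Monotone f)
    (hg : Antitone g) (hf0 : ∀ θ, 0 ≤ f θ) (hg0 : ∀ θ, 0 ≤ g θ) :
    Monotone fun θ => f θ / (f θ + g θ) := by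
  intro θ θ' hθ
  dsimp only
  have hff := hf hθ
  have hgg := hg hθ
  rcases (hf0 θ).eq_or_lt with h | h
  · rw [← h, zero_div]
    exact div_nonneg (hf0 θ') (add_nonneg (hf0 θ') (hg0 θ'))
  rw [div_le_div_iff₀ (by linarith [hg0 θ]) (by linarith [hg0 θ'])]
  nlinarith [hf0 θ', hg0 θ']

lemma one_sub_div_le_div_add {a n p : ℝ} (ha : 0 < a) (hn : a ≤ n) (hp : 0 ≤ p) :
    1 - p / a ≤ n / (n + p) := by
  have hpa : p ≤ p / a * (n + p) := by
    rw [div_mul_eq_mul_div, le_div_iff₀ ha]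
    nlinarith
  rw [le_div_iff₀ (by linarith)]
  nlinarith

namespace Gfun

variable {ψ : ℝ → ℝ} {Q : Measure ℝ}

def lowerPart (ψ : ℝ → ℝ) (θ y : ℝ) : ℝ := |ψ (y - θ)| * (if y ≤ θ then 1 else 0)

def upperPart (ψ : ℝ → ℝ) (θ y : ℝ) : ℝ := |ψ (y - θ)| * (if y ≤ θ then 0 else 1)

lemma lowerPart_nonneg (θ y : ℝ) : 0 ≤ lowerPart ψ θ y := by unfold lowerPart; positivity

lemma upperPart_nonneg (θ y : ℝ) : 0 ≤ upperPart ψ θ y := by unfold upperPart; positivity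

lemma lowerPart_add_upperPart (θ y : ℝ) : lowerPart ψ θ y + upperPart ψ θ y = |ψ (y - θ)| := by
  unfold lowerPart upperPart
  split_ifs <;> ring

lemma lowerPart_le (θ y : ℝ) : lowerPart ψ θ y ≤ |ψ (y - θ)| :=
  (le_add_of_nonneg_right (upperPart_nonneg θ y)).trans_eq (lowerPart_add_upperPart θ y)

lemma upperPart_le (θ y : ℝ) : upperPart ψ θ y ≤ |ψ (y - θ)| :=
  (le_add_of_nonneg_left (lowerPart_nonneg θ y)).trans_eq (lowerPart_add_upperPart θ y)

lemma measurable_lowerPart (hψ : Monotone ψ) (θ : ℝ) : Measurable (lowerPart ψ θ) :=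
  (hψ.measurable.comp (measurable_sub_const θ)).abs.mul
    (measurable_const.ite (measurableSet_le measurable_id measurable_const) measurable_const)

lemma measurable_upperPart (hψ : Monotone ψ) (θ : ℝ) : Measurable (upperPart ψ θ) :=
  (hψ.measurable.comp (measurable_sub_const θ)).abs.mul
    (measurable_const.ite (measurableSet_le measurable_id measurable_const) measurable_const)

lemma monotone_lowerPart (hψ : IsScoreFunction ψ) (y : ℝ) :
    Monotone fun θ => lowerPart ψ θ y := by
  intro θ θ' hθ
  simp only [lowerPart]
  by_cases hy : y ≤ θ
  · have hψθ : ψ (y - θ) ≤ 0 := (hψ.monotone (by linarith)).trans hψ.nonpos_zero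
    simp only [hy, hy.trans hθ, if_true, mul_one, abs_of_nonpos hψθ,
      abs_of_nonpos ((hψ.monotone (by linarith : y - θ' ≤ y - θ)).trans hψθ)]
    exact neg_le_neg (hψ.monotone (by linarith))
  · simp only [hy, if_false, mul_zero]
    positivity

lemma antitone_upperPart (hψ : IsScoreFunction ψ) (y : ℝ) :
    Antitone fun θ => upperPart ψ θ y := by
  intro θ θ' hθ
  simp only [upperPart]
  by_cases hy : y ≤ θ'
  · simp only [hy, if_true, mul_zero]
    positivity
  · have hy' : ¬ y ≤ θ := fun h => hy (h.trans hθ)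
    have hψθ' : 0 < ψ (y - θ') := hψ.pos_of_pos _ (by linarith)
    simp only [hy, hy', if_false, mul_one, abs_of_pos hψθ',
      abs_of_pos (hψθ'.trans_le (hψ.monotone (by linarith : y - θ' ≤ y - θ)))]
    exact hψ.monotone (by linarith)

variable {θ : ℝ}

lemma integrable_lowerPart (hψ : Monotone ψ) (hInt : Integrable (fun y => |ψ (y - θ)|) Q) :
    Integrable (lowerPart ψ θ) Q :=
  hInt.mono' (measurable_lowerPart hψ θ).aestronglyMeasurable <| .of_forall fun y => by
    rw [Real.norm_of_nonneg (lowerPart_nonneg θ y)]; exact lowerPart_le θ y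

lemma integrable_upperPart (hψ : Monotone ψ) (hInt : Integrable (fun y => |ψ (y - θ)|) Q) :
    Integrable (upperPart ψ θ) Q :=
  hInt.mono' (measurable_upperPart hψ θ).aestronglyMeasurable <| .of_forall fun y => by
    rw [Real.norm_of_nonneg (upperPart_nonneg θ y)]; exact upperPart_le θ y

def lowerMass (ψ : ℝ → ℝ) (Q : Measure ℝ) (θ : ℝ) : ℝ := ∫ y, lowerPart ψ θ y ∂Q

def upperMass (ψ : ℝ → ℝ) (Q : Measure ℝ) (θ : ℝ) : ℝ := ∫ y, upperPart ψ θ y ∂Q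

lemma lowerMass_nonneg (θ : ℝ) : 0 ≤ lowerMass ψ Q θ := integral_nonneg (lowerPart_nonneg θ)

lemma upperMass_nonneg (θ : ℝ) : 0 ≤ upperMass ψ Q θ := integral_nonneg (upperPart_nonneg θ)

lemma eq_lowerMass_div (hψ : Monotone ψ) (hInt : ∀ θ, Integrable (fun y => |ψ (y - θ)|) Q) :
    Gfun ψ Q = fun θ => lowerMass ψ Q θ / (lowerMass ψ Q θ + upperMass ψ Q θ) := by
  ext θ
  rw [Gfun, lowerMass, upperMass, ← integral_add (integrable_lowerPart hψ (hInt θ))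
    (integrable_upperPart hψ (hInt θ))]
  simp only [lowerPart_add_upperPart]
  rfl

lemma monotone_lowerMass (hψ : IsScoreFunction ψ)
    (hInt : ∀ θ, Integrable (fun y => |ψ (y - θ)|) Q) : Monotone (lowerMass ψ Q) := fun θ θ' hθ =>
  integral_mono (integrable_lowerPart hψ.monotone (hInt θ))
    (integrable_lowerPart hψ.monotone (hInt θ')) fun y => monotone_lowerPart hψ y hθ

lemma antitone_upperMass (hψ : IsScoreFunction ψ)
    (hInt : ∀ θ, Integrable (fun y => |ψ (y - θ)|) Q) : Antitone (upperMass ψ Q) := fun θ θ' hθ =>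
  integral_mono (integrable_upperPart hψ.monotone (hInt θ'))
    (integrable_upperPart hψ.monotone (hInt θ)) fun y => antitone_upperPart hψ y hθ

lemma tendsto_lowerMass_atBot (hψ : IsScoreFunction ψ)
    (hInt : ∀ θ, Integrable (fun y => |ψ (y - θ)|) Q) :
    Tendsto (lowerMass ψ Q) atBot (𝓝 0) := by
  have hlim : ∀ y, Tendsto (fun θ => lowerPart ψ θ y) atBot (𝓝 0) := fun y =>
    tendsto_const_nhds.congr' <| (eventually_lt_atBot y).mono fun θ hθ => by
      simp [lowerPart, not_le.2 hθ]
  have h := tendsto_integral_filter_of_dominated_convergence _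
    (.of_forall fun θ => (measurable_lowerPart hψ.monotone θ).aestronglyMeasurable)
    ((eventually_le_atBot 0).mono fun θ hθ => .of_forall fun y => by
      rw [Real.norm_of_nonneg (lowerPart_nonneg θ y)]
      exact (monotone_lowerPart hψ y hθ).trans (lowerPart_le 0 y))
    (hInt 0) (.of_forall hlim)
  rwa [integral_zero] at h

lemma tendsto_upperMass_atTop (hψ : IsScoreFunction ψ)
    (hInt : ∀ θ, Integrable (fun y => |ψ (y - θ)|) Q) :
    Tendsto (upperMass ψ Q) atTop (𝓝 0) := by
  have hlim : ∀ y, Tendsto (fun θ => upperPart ψ θ y) atTop (𝓝 0) := fun y =>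
    tendsto_const_nhds.congr' <| (eventually_ge_atTop y).mono fun θ hθ => by
      simp [upperPart, hθ]
  have h := tendsto_integral_filter_of_dominated_convergence _
    (.of_forall fun θ => (measurable_upperPart hψ.monotone θ).aestronglyMeasurable)
    ((eventually_ge_atTop 0).mono fun θ hθ => .of_forall fun y => by
      rw [Real.norm_of_nonneg (upperPart_nonneg θ y)]
      exact (antitone_upperPart hψ y hθ).trans (upperPart_le 0 y))
    (hInt 0) (.of_forall hlim)
  rwa [integral_zero] at h

lemma exists_lowerMass_pos [NeZero Q] (hψ : IsScoreFunction ψ)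
    (hInt : ∀ θ, Integrable (fun y => |ψ (y - θ)|) Q) : ∃ θ, 0 < lowerMass ψ Q θ := by
  obtain ⟨θ, hθ⟩ := ((tendsto_measure_Iic_atTop Q).eventually_ne (NeZero.ne (Q univ))).exists
  refine ⟨θ + 1, (integral_pos_iff_support_of_nonneg (lowerPart_nonneg _)
    (integrable_lowerPart hψ.monotone (hInt _))).2 ?_⟩
  refine (pos_iff_ne_zero.2 hθ).trans_le (measure_mono fun y (hy : y ≤ θ) => ?_)
  have hψy : ψ (y - (θ + 1)) < 0 := hψ.neg_of_neg _ (by linarith)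
  simp [lowerPart, show y ≤ θ + 1 by linarith, hψy.ne]

lemma exists_upperMass_pos [NeZero Q] (hψ : IsScoreFunction ψ)
    (hInt : ∀ θ, Integrable (fun y => |ψ (y - θ)|) Q) : ∃ θ, 0 < upperMass ψ Q θ := by
  obtain ⟨θ, hθ⟩ := ((tendsto_measure_Ici_atBot Q).eventually_ne (NeZero.ne (Q univ))).exists
  refine ⟨θ - 1, (integral_pos_iff_support_of_nonneg (upperPart_nonneg _)
    (integrable_upperPart hψ.monotone (hInt _))).2 ?_⟩
  refine (pos_iff_ne_zero.2 hθ).trans_le (measure_mono fun y (hy : θ ≤ y) => ?_)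
  have hψy : 0 < ψ (y - (θ - 1)) := hψ.pos_of_pos _ (by linarith)
  simp [upperPart, show ¬ y ≤ θ - 1 by linarith, hψy.ne']

end Gfun

section

variable {ψ : ℝ → ℝ} {Q : Measure ℝ}
open Gfun

lemma monotone_Gfun (hψ : IsScoreFunction ψ) (hInt : ∀ θ, Integrable (fun y => |ψ (y - θ)|) Q) :
    Monotone (Gfun ψ Q) := by
  rw [eq_lowerMass_div hψ.monotone hInt]
  exact monotone_div_add_of_monotone_of_antitone (monotone_lowerMass hψ hInt)
    (antitone_upperMass hψ hInt) lowerMass_nonneg upperMass_nonneg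

lemma tendsto_Gfun_atBot_s7 [NeZero Q] (hψ : IsScoreFunction ψ)
    (hInt : ∀ θ, Integrable (fun y => |ψ (y - θ)|) Q) : Tendsto (Gfun ψ Q) atBot (𝓝 0) := by
  obtain ⟨θ₁, hθ₁⟩ := exists_upperMass_pos hψ hInt
  rw [eq_lowerMass_div hψ.monotone hInt]
  refine tendsto_of_tendsto_of_tendsto_of_le_of_le' tendsto_const_nhds
    (by simpa using (tendsto_lowerMass_atBot hψ hInt).div_const (upperMass ψ Q θ₁))
    (.of_forall fun θ => div_nonneg (lowerMass_nonneg θ)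
      (add_nonneg (lowerMass_nonneg θ) (upperMass_nonneg θ)))
    ((eventually_le_atBot θ₁).mono fun θ hθ => div_le_div_of_nonneg_left (lowerMass_nonneg θ) hθ₁
      (le_add_of_nonneg_of_le (lowerMass_nonneg θ) (antitone_upperMass hψ hInt hθ)))

lemma tendsto_Gfun_atTop_s7 [NeZero Q] (hψ : IsScoreFunction ψ)
    (hInt : ∀ θ, Integrable (fun y => |ψ (y - θ)|) Q) : Tendsto (Gfun ψ Q) atTop (𝓝 1) := by
  obtain ⟨θ₀, hθ₀⟩ := exists_lowerMass_pos hψ hInt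
  have hlower : Tendsto (fun θ => 1 - upperMass ψ Q θ / lowerMass ψ Q θ₀) atTop (𝓝 1) := by
    simpa using tendsto_const_nhds.sub
      ((tendsto_upperMass_atTop hψ hInt).div_const (lowerMass ψ Q θ₀))
  rw [eq_lowerMass_div hψ.monotone hInt]
  refine tendsto_of_tendsto_of_tendsto_of_le_of_le' hlower tendsto_const_nhds
    ((eventually_ge_atTop θ₀).mono fun θ hθ =>
      one_sub_div_le_div_add hθ₀ (monotone_lowerMass hψ hInt hθ) (upperMass_nonneg θ))
    (.of_forall fun θ => div_le_one_of_le₀ (le_add_of_nonneg_right (upperMass_nonneg θ))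
      (add_nonneg (lowerMass_nonneg θ) (upperMass_nonneg θ)))

end

lemma Monotone.csInf_setOf_le_le_iff {G : ℝ → ℝ} (hG : Monotone G) {α c : ℝ}
    (hne : ∃ θ, α ≤ G θ) (hlt : ∃ θ, G θ < α) :
    sInf {θ | α ≤ G θ} ≤ c ↔ ∀ c' > c, α ≤ G c' := by
  obtain ⟨θ₁, hθ₁⟩ := hlt
  have hbdd : BddBelow {θ | α ≤ G θ} :=
    ⟨θ₁, fun θ hθ => (hG.reflect_lt (hθ₁.trans_le hθ)).le⟩
  refine ⟨fun h c' hc' => ?_, fun h => le_of_forall_gt_imp_ge_of_dense fun c' hc' =>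
    csInf_le hbdd (h c' hc')⟩
  obtain ⟨θ, hθ, hθc'⟩ := (csInf_lt_iff hbdd hne).1 (h.trans_lt hc')
  exact hθ.trans (hG hθc'.le)

lemma MQuant_le_iff {ψ : ℝ → ℝ} {Q : Measure ℝ} [NeZero Q] (hψ : IsScoreFunction ψ)
    (hInt : ∀ θ, Integrable (fun y => |ψ (y - θ)|) Q) {α : ℝ} (hα : α ∈ Ioo 0 1) {c : ℝ} :
    MQuant ψ Q α ≤ c ↔ ∀ c' > c, α ≤ Gfun ψ Q c' :=
  (monotone_Gfun hψ hInt).csInf_setOf_le_le_iff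
    (((tendsto_Gfun_atTop_s7 hψ hInt).eventually_const_lt hα.2).exists.imp fun _ => le_of_lt)
    ((tendsto_Gfun_atBot_s7 hψ hInt).eventually_lt_const hα.1).exists

lemma le_MDepth {d : ℕ} {ψ : ℝ → ℝ} {P : Measure (EuclideanSpace ℝ (Fin d))} {α : ℝ}
    {z : EuclideanSpace ℝ (Fin d)} (hα : α ∈ Ioo 0 1) (hz : z ∈ MRegion ψ P α) :
    α ≤ MDepth ψ P z :=
  le_csSup ⟨1, fun _ hβ => hβ.1.2.le⟩ ⟨hα, hz⟩

instance {d : ℕ} (P : Measure (EuclideanSpace ℝ (Fin d))) [IsProbabilityMeasure P]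
    (u : EuclideanSpace ℝ (Fin d)) : IsProbabilityMeasure (dirProj P u) :=
  Measure.isProbabilityMeasure_map (continuous_const.inner continuous_id).aemeasurable

lemma mem_MRegion_iff {d : ℕ} {ψ : ℝ → ℝ} {P : Measure (EuclideanSpace ℝ (Fin d))}
    [IsProbabilityMeasure P] (hψ : IsScoreFunction ψ)
    (hInt : ∀ u : EuclideanSpace ℝ (Fin d), ‖u‖ = 1 → ∀ θ : ℝ,
      Integrable (fun t => |ψ (t - θ)|) (dirProj P u))
    {α : ℝ} (hα : α ∈ Ioo 0 1) {z : EuclideanSpace ℝ (Fin d)} :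
    z ∈ MRegion ψ P α ↔ ∀ u : EuclideanSpace ℝ (Fin d), ‖u‖ = 1 →
      ∀ c > ⟪u, z⟫, α ≤ Gfun ψ (dirProj P u) c := by
  simp only [MRegion, MHalf, mem_iInter, mem_ofPred_eq]
  exact forall₂_congr fun u hu => MQuant_le_iff hψ (hInt u hu) hα

theorem stmt_7_general {d : ℕ} (ρ ψ : ℝ → ℝ) (hρ : LossClass ρ)
    (hψ : IsLeftDeriv ρ ψ)
    (P : Measure (EuclideanSpace ℝ (Fin d))) [IsProbabilityMeasure P]
    (hP2 : ∀ u : EuclideanSpace ℝ (Fin d), ‖u‖ = 1 → ∀ θ : ℝ,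
      Integrable (fun t => |ψ (t - θ)|) (dirProj P u))
    (α : ℝ) (hα : α ∈ Set.Ioo (0 : ℝ) 1) :
    {z : EuclideanSpace ℝ (Fin d) | α ≤ MDepth ψ P z} = MRegion ψ P α := by
  have hscore := hρ.isScoreFunction hψ
  ext z
  refine ⟨fun hz => ?_, le_MDepth hα⟩
  have hne : {β | β ∈ Ioo 0 1 ∧ z ∈ MRegion ψ P β}.Nonempty := by
    by_contra h
    rw [not_nonempty_iff_eq_empty] at h
    simp only [mem_ofPred_eq, MDepth, h, Real.sSup_empty] at hz
    exact hz.not_gt hα.1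
  rw [mem_MRegion_iff hscore hP2 hα]
  intro u hu c hc
  exact hz.trans (csSup_le hne fun β hβ => (mem_MRegion_iff hscore hP2 hβ.1).1 hβ.2 u hu c hc)

theorem stmt_7 {d : ℕ} (hd : 0 < d) (ρ ψ : ℝ → ℝ) (hρ : LossClass ρ)
    (hψ : IsLeftDeriv ρ ψ)
    (P : Measure (EuclideanSpace ℝ (Fin d))) [IsProbabilityMeasure P]
    (hP1 : ∀ u : EuclideanSpace ℝ (Fin d), ‖u‖ = 1 → ∀ c : ℝ, P {z | ⟪u, z⟫ = c} < 1)
    (hP2 : ∀ u : EuclideanSpace ℝ (Fin d), ‖u‖ = 1 → ∀ θ : ℝ,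
      Integrable (fun t => |ψ (t - θ)|) (dirProj P u))
    (α : ℝ) (hα : α ∈ Set.Ioo (0 : ℝ) 1) :
    {z : EuclideanSpace ℝ (Fin d) | α ≤ MDepth ψ P z} = MRegion ψ P α :=
  stmt_7_general ρ ψ hρ hψ P hP2 α hα
end
end

section
/- Fix ρ ∈ 𝒞 and P ∈ 𝒫^ρ_d. If P is centrally symmetric about θ_* ∈ ℝ^d, i.e. P[θ_* + B] = P[θ_* − B] for every Borel set B ⊆ ℝ^d, then MD^ρ(θ_*,P) ≥ MD^ρ(z,P) for every z ∈ ℝ^d. -/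
open MeasureTheory Set Filter
open scoped RealInnerProductSpace ENNReal

noncomputable section

/-!
Central symmetry about `θs` makes the law of `-⟪u, X⟫` the law of `⟪u, X⟫` shifted by
`-2⟪u, θs⟫`, and M-quantiles are translation equivariant, so
`θ_α(P_{-u}) = θ_α(P_u) - 2⟪u, θs⟫`. Hence a point `z` of `H_{α,u} ∩ H_{α,-u}` satisfies
`θ_α(P_u) ≤ ⟪u, z⟫ ≤ 2⟪u, θs⟫ - θ_α(P_u)`, so `θs ∈ H_{α,u}`: every region `R_α` containing `z`
contains `θs`. Translation equivariance of the infimum needs `{θ | α ≤ G(θ)}` to be nonempty and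
bounded below; this holds because `G → 0` at `-∞` and `G → 1` at `+∞`, by the signs and
monotonicity of `ψ` and the integrability of `|ψ(· - θ)|`.
-/

open scoped Topology

section LeftDeriv

variable {ρ ψ : ℝ → ℝ}

lemma IsLeftDeriv.le_slope (hρ : ConvexOn ℝ univ ρ) (hψ : IsLeftDeriv ρ ψ) {x y : ℝ}
    (hxy : x < y) : ψ x ≤ slope ρ x y := by
  rw [← (hψ x).derivWithin (uniqueDiffWithinAt_Iio x)]
  exact (hρ.leftDeriv_le_rightDeriv_of_mem_interior (by simp)).trans
    (hρ.rightDeriv_le_slope_of_mem_interior (by simp) (mem_univ y) hxy)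

lemma IsLeftDeriv.slope_le (hρ : ConvexOn ℝ univ ρ) (hψ : IsLeftDeriv ρ ψ) {x y : ℝ}
    (hxy : x < y) : slope ρ x y ≤ ψ y :=
  hρ.slope_le_of_hasDerivWithinAt_Iio (mem_univ x) (mem_univ y) hxy (hψ y)

lemma IsLeftDeriv.monotone (hρ : ConvexOn ℝ univ ρ) (hψ : IsLeftDeriv ρ ψ) : Monotone ψ := by
  intro x y hxy
  rcases hxy.eq_or_lt with rfl | h
  · rfl
  · exact (hψ.le_slope hρ h).trans (hψ.slope_le hρ h)

lemma LossClass.pos (hρ : LossClass ρ) {t : ℝ} (ht : t ≠ 0) : 0 < ρ t :=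
  (hρ.2.1 t).lt_of_ne' fun h => ht ((hρ.2.2.2 t).1 h)

lemma LossClass.slope_zero (hρ : LossClass ρ) (t : ℝ) : slope ρ 0 t = ρ t / t := by
  simp [slope_def_field, (hρ.2.2.2 0).2 rfl]

lemma IsLeftDeriv.pos_of_pos (hρ : LossClass ρ) (hψ : IsLeftDeriv ρ ψ) {t : ℝ} (ht : 0 < t) :
    0 < ψ t :=
  (div_pos (hρ.pos ht.ne') ht).trans_le (hρ.slope_zero t ▸ hψ.slope_le hρ.1 ht)

lemma IsLeftDeriv.neg_of_neg (hρ : LossClass ρ) (hψ : IsLeftDeriv ρ ψ) {t : ℝ} (ht : t < 0) :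
    ψ t < 0 := by
  have h := hψ.le_slope hρ.1 ht
  rw [slope_comm, hρ.slope_zero] at h
  exact h.trans_lt (div_neg_of_pos_of_neg (hρ.pos ht.ne) ht)

lemma IsLeftDeriv.apply_zero_nonpos (hρ : LossClass ρ) (hψ : IsLeftDeriv ρ ψ) : ψ 0 ≤ 0 := by
  refine le_of_tendsto ((hasDerivWithinAt_iff_tendsto_slope' self_notMem_Iio).1 (hψ 0)) ?_
  filter_upwards [self_mem_nhdsWithin] with t (ht : t < 0)
  rw [hρ.slope_zero]
  exact div_nonpos_of_nonneg_of_nonpos (hρ.2.1 t) ht.le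

end LeftDeriv

section Tails

variable (Q : Measure ℝ)

lemma tendsto_measure_Iic_atBot [IsFiniteMeasure Q] :
    Tendsto (fun x => Q (Iic x)) atBot (𝓝 0) := by
  have h := tendsto_measure_iInter_atBot (μ := Q) (fun _ => measurableSet_Iic.nullMeasurableSet)
    monotone_Iic ⟨0, measure_ne_top Q _⟩
  rwa [iInter_Iic_eq_empty_iff.2 (by simp [not_bddBelow_univ]), measure_empty] at h

lemma tendsto_measure_Ioi_atTop [IsFiniteMeasure Q] :
    Tendsto (fun x => Q (Ioi x)) atTop (𝓝 0) := by
  have h := tendsto_measure_iInter_atTop (μ := Q) (fun _ => measurableSet_Ioi.nullMeasurableSet)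
    (fun _ _ => Ioi_subset_Ioi) ⟨0, measure_ne_top Q _⟩
  rwa [iInter_eq_empty_iff.2 fun x => ⟨x, self_notMem_Ioi⟩, measure_empty] at h

lemma exists_measure_Ioi_pos [NeZero Q] : ∃ r, 0 < Q (Ioi r) := by
  obtain ⟨r, hr⟩ := ((tendsto_measure_Ici_atBot Q).eventually
    (lt_mem_nhds (Measure.measure_univ_pos.2 (NeZero.ne Q)))).exists
  exact ⟨r - 1, hr.trans_le (measure_mono (Ici_subset_Ioi.2 (by linarith)))⟩

lemma exists_measure_Iio_pos [NeZero Q] : ∃ r, 0 < Q (Iio r) := by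
  obtain ⟨r, hr⟩ := ((tendsto_measure_Iic_atTop Q).eventually
    (lt_mem_nhds (Measure.measure_univ_pos.2 (NeZero.ne Q)))).exists
  exact ⟨r + 1, hr.trans_le (measure_mono (Iic_subset_Iio.2 (by linarith)))⟩

end Tails

lemma Monotone.abs_le_abs_of_nonpos {α : Type*} [Preorder α] {f : α → ℝ} (hf : Monotone f)
    {s t : α} (hst : s ≤ t) (ht : f t ≤ 0) : |f t| ≤ |f s| := by
  rw [abs_of_nonpos ht, abs_of_nonpos ((hf hst).trans ht)]
  exact neg_le_neg (hf hst)

lemma Monotone.abs_le_abs_of_nonneg {α : Type*} [Preorder α] {f : α → ℝ} (hf : Monotone f)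
    {s t : α} (hst : s ≤ t) (hs : 0 ≤ f s) : |f s| ≤ |f t| := by
  rw [abs_of_nonneg hs, abs_of_nonneg (hs.trans (hf hst))]
  exact hf hst

section Gfun

variable {ψ : ℝ → ℝ} {Q : Measure ℝ}

lemma Gfun_eq (hint : ∀ θ, Integrable (fun t => |ψ (t - θ)|) Q) (θ : ℝ) :
    Gfun ψ Q θ = (∫ y in Iic θ, |ψ (y - θ)| ∂Q) /
      ((∫ y in Iic θ, |ψ (y - θ)| ∂Q) + ∫ y in Ioi θ, |ψ (y - θ)| ∂Q) := by
  rw [Gfun, ← compl_Iic, integral_add_compl measurableSet_Iic (hint θ),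
    ← integral_indicator measurableSet_Iic]
  congr 2 with y
  by_cases h : y ≤ θ <;> simp [h]

variable [IsProbabilityMeasure Q] (hmono : Monotone ψ) (hneg : ∀ t < 0, ψ t < 0)
  (hpos : ∀ t > 0, 0 < ψ t) (hint : ∀ θ, Integrable (fun t => |ψ (t - θ)|) Q)
include hmono hpos hint

lemma eventually_Gfun_lt (h0 : ψ 0 ≤ 0) {α : ℝ} (hα : 0 < α) :
    ∀ᶠ θ in atBot, Gfun ψ Q θ < α := by
  obtain ⟨θ₀, hθ₀⟩ := exists_measure_Ioi_pos Q
  set m := ∫ y in Ioi θ₀, |ψ (y - θ₀)| ∂Q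
  have hm : 0 < m := by
    rw [setIntegral_pos_iff_support_of_nonneg_ae (.of_forall fun y => abs_nonneg _)
      (hint θ₀).integrableOn]
    exact hθ₀.trans_le (measure_mono fun y hy => ⟨abs_ne_zero.2 (hpos _ (sub_pos.2 hy)).ne', hy⟩)
  have hsmall : ∀ᶠ θ in atBot, ∫ y in Iic θ, |ψ (y - θ₀)| ∂Q < α * m :=
    ((hint θ₀).tendsto_setIntegral_nhds_zero (tendsto_measure_Iic_atBot Q)).eventually
      (gt_mem_nhds (by positivity))
  filter_upwards [hsmall, eventually_le_atBot θ₀] with θ hθsmall hθ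
  have hlower : ∫ y in Iic θ, |ψ (y - θ)| ∂Q ≤ ∫ y in Iic θ, |ψ (y - θ₀)| ∂Q :=
    setIntegral_mono_on (hint θ).integrableOn (hint θ₀).integrableOn measurableSet_Iic
      fun y (hy : y ≤ θ) => hmono.abs_le_abs_of_nonpos (by linarith)
        ((hmono (sub_nonpos.2 hy)).trans h0)
  have hupper : m ≤ ∫ y in Ioi θ, |ψ (y - θ)| ∂Q := calc
    m ≤ ∫ y in Ioi θ₀, |ψ (y - θ)| ∂Q :=
      setIntegral_mono_on (hint θ₀).integrableOn (hint θ).integrableOn measurableSet_Ioi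
        fun y (hy : θ₀ < y) => hmono.abs_le_abs_of_nonneg (by linarith) (hpos _ (by linarith)).le
    _ ≤ ∫ y in Ioi θ, |ψ (y - θ)| ∂Q :=
      setIntegral_mono_set (hint θ).integrableOn (.of_forall fun y => abs_nonneg _)
        (Ioi_subset_Ioi hθ).eventuallyLE
  have hN : 0 ≤ ∫ y in Iic θ, |ψ (y - θ)| ∂Q :=
    setIntegral_nonneg measurableSet_Iic fun y _ => abs_nonneg _
  rw [Gfun_eq hint, div_lt_iff₀ (by linarith)]
  nlinarith

include hneg in
lemma eventually_le_Gfun {α : ℝ} (hα : 0 < α) (hα1 : α < 1) :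
    ∀ᶠ θ in atTop, α ≤ Gfun ψ Q θ := by
  obtain ⟨θ₁, hθ₁⟩ := exists_measure_Iio_pos Q
  set n := ∫ y in Iio θ₁, |ψ (y - θ₁)| ∂Q
  have hn : 0 < n := by
    rw [setIntegral_pos_iff_support_of_nonneg_ae (.of_forall fun y => abs_nonneg _)
      (hint θ₁).integrableOn]
    exact hθ₁.trans_le (measure_mono fun y hy => ⟨abs_ne_zero.2 (hneg _ (sub_neg.2 hy)).ne, hy⟩)
  have hsmall : ∀ᶠ θ in atTop, ∫ y in Ioi θ, |ψ (y - θ₁)| ∂Q < (1 - α) / α * n :=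
    ((hint θ₁).tendsto_setIntegral_nhds_zero (tendsto_measure_Ioi_atTop Q)).eventually
      (gt_mem_nhds (mul_pos (div_pos (sub_pos.2 hα1) hα) hn))
  filter_upwards [hsmall, eventually_ge_atTop θ₁] with θ hθsmall hθ
  have hupper : ∫ y in Ioi θ, |ψ (y - θ)| ∂Q ≤ ∫ y in Ioi θ, |ψ (y - θ₁)| ∂Q :=
    setIntegral_mono_on (hint θ).integrableOn (hint θ₁).integrableOn measurableSet_Ioi
      fun y (hy : θ < y) => hmono.abs_le_abs_of_nonneg (by linarith) (hpos _ (by linarith)).le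
  have hlower : n ≤ ∫ y in Iic θ, |ψ (y - θ)| ∂Q := calc
    n ≤ ∫ y in Iio θ₁, |ψ (y - θ)| ∂Q :=
      setIntegral_mono_on (hint θ₁).integrableOn (hint θ).integrableOn measurableSet_Iio
        fun y (hy : y < θ₁) => hmono.abs_le_abs_of_nonpos (by linarith) (hneg _ (by linarith)).le
    _ ≤ ∫ y in Iic θ, |ψ (y - θ)| ∂Q :=
      setIntegral_mono_set (hint θ).integrableOn (.of_forall fun y => abs_nonneg _)
        (Iio_subset_Iic_self.trans (Iic_subset_Iic.2 hθ)).eventuallyLE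
  have hM : 0 ≤ ∫ y in Ioi θ, |ψ (y - θ)| ∂Q :=
    setIntegral_nonneg measurableSet_Ioi fun y _ => abs_nonneg _
  have key : α * ((1 - α) / α * n) = (1 - α) * n := by field_simp
  rw [Gfun_eq hint, le_div_iff₀ (by linarith)]
  nlinarith

end Gfun

lemma Gfun_map_add_const (ψ : ℝ → ℝ) (Q : Measure ℝ) (a θ : ℝ) :
    Gfun ψ (Q.map (· + a)) θ = Gfun ψ Q (θ - a) := by
  have he : MeasurableEmbedding (· + a : ℝ → ℝ) := (Homeomorph.addRight a).measurableEmbedding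
  simp only [Gfun]
  rw [he.integral_map, he.integral_map]
  congr 1 <;> congr 1 with x <;> simp [sub_sub_eq_add_sub, le_sub_iff_add_le]

lemma MQuant_map_add_const (ψ : ℝ → ℝ) (Q : Measure ℝ) (a α : ℝ)
    (hne : {θ | α ≤ Gfun ψ Q θ}.Nonempty) (hbdd : BddBelow {θ | α ≤ Gfun ψ Q θ}) :
    MQuant ψ (Q.map (· + a)) α = MQuant ψ Q α + a := by
  have hset : {θ | α ≤ Gfun ψ (Q.map (· + a)) θ} =
      OrderIso.addRight a '' {θ | α ≤ Gfun ψ Q θ} := by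
    ext θ
    simp only [mem_ofPred_eq, mem_image, OrderIso.addRight_apply, Gfun_map_add_const,
      ← eq_sub_iff_add_eq, exists_eq_right]
  rw [MQuant, hset, ← OrderIso.map_csInf' _ hne hbdd]
  rfl

section Symmetry

variable {d : ℕ} {P : Measure (EuclideanSpace ℝ (Fin d))} {θs : EuclideanSpace ℝ (Fin d)}
  (hsym : ∀ B : Set (EuclideanSpace ℝ (Fin d)), MeasurableSet B →
    P ((fun x => θs + x) '' B) = P ((fun x => θs - x) '' B))
include hsym

lemma map_reflect_eq_self : P.map (fun x => θs + (θs - x)) = P := by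
  ext A hA
  have hB : MeasurableSet ((θs + ·) ⁻¹' A) := measurable_const_add θs hA
  have himage : (θs - ·) '' ((θs + ·) ⁻¹' A) = (fun x => θs + (θs - x)) ⁻¹' A := by
    ext x
    constructor
    · rintro ⟨y, hy, rfl⟩
      simpa using hy
    · intro hx
      exact ⟨θs - x, hx, sub_sub_cancel θs x⟩
  rw [Measure.map_apply (by fun_prop) hA, ← himage, ← hsym _ hB,
    image_preimage_eq A (add_left_surjective θs)]

lemma dirProj_neg (u : EuclideanSpace ℝ (Fin d)) :
    dirProj P (-u) = (dirProj P u).map (· + -(2 * ⟪u, θs⟫)) := by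
  rw [dirProj, dirProj]
  nth_rw 1 [← map_reflect_eq_self hsym]
  rw [Measure.map_map (by fun_prop) (by fun_prop), Measure.map_map (by fun_prop) (by fun_prop)]
  congr 1 with x
  simp only [Function.comp_apply, inner_neg_left, inner_add_right, inner_sub_right]
  ring

end Symmetry

lemma MDepth_le_of_mem_MRegion {d : ℕ} {ψ : ℝ → ℝ} {P : Measure (EuclideanSpace ℝ (Fin d))}
    {z w : EuclideanSpace ℝ (Fin d)}
    (h : ∀ α ∈ Ioo (0 : ℝ) 1, z ∈ MRegion ψ P α → w ∈ MRegion ψ P α) :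
    MDepth ψ P z ≤ MDepth ψ P w :=
  Real.sSup_le (fun α ⟨hα, hz⟩ => le_csSup ⟨1, fun _ hβ => hβ.1.2.le⟩ ⟨hα, h α hα hz⟩)
    (Real.sSup_nonneg fun _ hβ => hβ.1.1.le)

lemma center_mem_MRegion_of_mem {d : ℕ} {ψ : ℝ → ℝ} (hmono : Monotone ψ)
    (hneg : ∀ t < 0, ψ t < 0) (hpos : ∀ t > 0, 0 < ψ t) (h0 : ψ 0 ≤ 0)
    {P : Measure (EuclideanSpace ℝ (Fin d))} [IsProbabilityMeasure P]
    (hint : ∀ u : EuclideanSpace ℝ (Fin d), ‖u‖ = 1 → ∀ θ : ℝ,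
      Integrable (fun t => |ψ (t - θ)|) (dirProj P u))
    {θs : EuclideanSpace ℝ (Fin d)}
    (hsym : ∀ B : Set (EuclideanSpace ℝ (Fin d)), MeasurableSet B →
      P ((fun x => θs + x) '' B) = P ((fun x => θs - x) '' B))
    {α : ℝ} (hα : α ∈ Ioo (0 : ℝ) 1) {z : EuclideanSpace ℝ (Fin d)} (hz : z ∈ MRegion ψ P α) :
    θs ∈ MRegion ψ P α := by
  simp only [MRegion, mem_iInter₂, mem_ofPred_eq] at hz ⊢
  intro u hu
  have : IsProbabilityMeasure (dirProj P u) := Measure.isProbabilityMeasure_map (by fun_prop)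
  have hne : {θ | α ≤ Gfun ψ (dirProj P u) θ}.Nonempty :=
    (eventually_le_Gfun hmono hneg hpos (hint u hu) hα.1 hα.2).exists
  have hbdd : BddBelow {θ | α ≤ Gfun ψ (dirProj P u) θ} := by
    obtain ⟨b, hb⟩ := eventually_atBot.1 (eventually_Gfun_lt hmono hpos (hint u hu) h0 hα.1)
    exact ⟨b, fun θ hθ => le_of_not_ge fun h => (hb θ h).not_ge hθ⟩
  have hzu : MQuant ψ (dirProj P u) α ≤ ⟪u, z⟫ := hz u hu
  have hzu' : MQuant ψ (dirProj P (-u)) α ≤ ⟪-u, z⟫ := hz (-u) (by rwa [norm_neg])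
  rw [dirProj_neg hsym, MQuant_map_add_const _ _ _ _ hne hbdd, inner_neg_left] at hzu'
  change MQuant ψ (dirProj P u) α ≤ ⟪u, θs⟫
  linarith

theorem stmt_9_general {d : ℕ} (ρ ψ : ℝ → ℝ) (hρ : LossClass ρ)
    (hψ : IsLeftDeriv ρ ψ)
    (P : Measure (EuclideanSpace ℝ (Fin d))) [IsProbabilityMeasure P]
    (hP2 : ∀ u : EuclideanSpace ℝ (Fin d), ‖u‖ = 1 → ∀ θ : ℝ,
      Integrable (fun t => |ψ (t - θ)|) (dirProj P u))
    (θs : EuclideanSpace ℝ (Fin d))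
    (hsym : ∀ B : Set (EuclideanSpace ℝ (Fin d)), MeasurableSet B →
      P ((fun x => θs + x) '' B) = P ((fun x => θs - x) '' B)) :
    ∀ z : EuclideanSpace ℝ (Fin d), MDepth ψ P z ≤ MDepth ψ P θs :=
  fun _ => MDepth_le_of_mem_MRegion fun _ hα hz =>
    center_mem_MRegion_of_mem (hψ.monotone hρ.1) (fun _ => hψ.neg_of_neg hρ)
      (fun _ => hψ.pos_of_pos hρ) (hψ.apply_zero_nonpos hρ) hP2 hsym hα hz

theorem stmt_9 {d : ℕ} (hd : 0 < d) (ρ ψ : ℝ → ℝ) (hρ : LossClass ρ)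
    (hψ : IsLeftDeriv ρ ψ)
    (P : Measure (EuclideanSpace ℝ (Fin d))) [IsProbabilityMeasure P]
    (hP1 : ∀ u : EuclideanSpace ℝ (Fin d), ‖u‖ = 1 → ∀ c : ℝ, P {z | ⟪u, z⟫ = c} < 1)
    (hP2 : ∀ u : EuclideanSpace ℝ (Fin d), ‖u‖ = 1 → ∀ θ : ℝ,
      Integrable (fun t => |ψ (t - θ)|) (dirProj P u))
    (θs : EuclideanSpace ℝ (Fin d))
    (hsym : ∀ B : Set (EuclideanSpace ℝ (Fin d)), MeasurableSet B →
      P ((fun x => θs + x) '' B) = P ((fun x => θs - x) '' B)) :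
    ∀ z : EuclideanSpace ℝ (Fin d), MDepth ψ P z ≤ MDepth ψ P θs :=
  stmt_9_general ρ ψ hρ hψ P hP2 θs hsym

end
end
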